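/- Let d ≥ 1 be an integer, let S ⊆ ℝ^d be a nonempty compact convex set, let x ∈ ℝ^d with ‖x‖ ≤ 1, let i ∈ ℕ, and set z = 2^{-3·2^i}/(16d). Assume width(S,x) ≥ 2^{-2^{i+1}}. Let m ∈ ℝ satisfy vol({v ∈ S + z𝔹 : ⟪v,x⟫ ≥ m}) = 2^{-2^{i-1}} · vol(S + z𝔹) (real powers of 2). Then the set obtained after the seller accepts the price m + z satisfies vol({v ∈ S : ⟪v,x⟫ ≤ m + z} + z𝔹) ≤ (1 − 1/(10·2^{2^{i-1}})) · vol(S + z𝔹). -/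

import Mathlib

open MeasureTheory Set
open scoped RealInnerProductSpace Pointwise ENNReal

noncomputable section

/-- Minkowski sum `K + z𝔹` of a set with `z` times the closed Euclidean unit ball. -/
def mink {d : ℕ} (K : Set (EuclideanSpace ℝ (Fin d))) (z : ℝ) :
    Set (EuclideanSpace ℝ (Fin d)) :=
  K + Metric.closedBall (0 : EuclideanSpace ℝ (Fin d)) z

/-- Width of a set `K` along direction `x`. -/
def width {d : ℕ} (K : Set (EuclideanSpace ℝ (Fin d))) (x : EuclideanSpace ℝ (Fin d)) : ℝ :=
  sSup ((fun v => ⟪v, x⟫) '' K) - sInf ((fun v => ⟪v, x⟫) '' K)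

/-!
Let `T = S + z𝔹` and `φ = ⟪·, x⟫`. For a convex body `T` and a point `q ∈ T` below a slab
`{c < φ < c + δ}`, the homothety centred at `q` with ratio `r = (c - φ q) / (c + δ - φ q)` maps
`T ∩ {φ < c + δ}` into `T ∩ {φ ≤ c}`, so the slab carries at most the fraction
`1 - r ^ d ≤ d δ / (c + δ - φ q)` of `vol T`. Since `T` contains points of `S` whose `φ`-values
differ by the width `w` of `S`, one of the two sides of any thin slab is far away, and the slab
`{m - z < φ < m + 3z}` has at most the fraction `8 d z / w = ε² / 2` of `vol T`, where
`ε = 2^{-2^{i-1}}`. Hence the cap `T ∩ {φ ≥ m + 3z}` keeps the fraction `ε - ε² / 2 ≥ ε / 10`,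
and it is disjoint from `{v ∈ S | φ v ≤ m + z} + z𝔹`, which lies in `{φ ≤ m + 2z}`.
-/

open Module

section Slab

variable {E : Type*} [NormedAddCommGroup E] [NormedSpace ℝ E] [MeasurableSpace E] [BorelSpace E]
  [FiniteDimensional ℝ E] (μ : Measure E) [μ.IsAddHaarMeasure] {T : Set E} (φ : E →L[ℝ] ℝ)

theorem Convex.measure_inter_preimage_Ioo_le_one_sub_pow (hT : Convex ℝ T) (hTfin : μ T ≠ ∞)
    {q : E} (hq : q ∈ T) {c δ : ℝ} (hqc : φ q ≤ c) (hδ : 0 < δ) :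
    μ (T ∩ φ ⁻¹' Ioo c (c + δ))
      ≤ ENNReal.ofReal (1 - ((c - φ q) / (c + δ - φ q)) ^ finrank ℝ E) * μ T := by
  set r := (c - φ q) / (c + δ - φ q)
  have hden : 0 < c + δ - φ q := by linarith
  have hr0 : 0 ≤ r := div_nonneg (by linarith) hden.le
  have hr1 : r ≤ 1 := (div_le_one hden).2 (by linarith)
  have hr_mul : r * (c + δ - φ q) = c - φ q := div_mul_cancel₀ _ hden.ne'
  set U := T ∩ φ ⁻¹' Iio (c + δ)
  have hH : MeasurableSet (φ ⁻¹' Iic c) := measurableSet_Iic.preimage φ.continuous.measurable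
  have hUfin : μ U ≠ ∞ := measure_ne_top_of_subset inter_subset_left hTfin
  have hmaps : AffineMap.homothety q r '' U ⊆ U ∩ φ ⁻¹' Iic c := by
    rintro _ ⟨v, ⟨hvT, hv⟩, rfl⟩
    have hφv : φ (AffineMap.homothety q r v) = φ q + r * (φ v - φ q) := by
      rw [AffineMap.homothety_eq_lineMap, AffineMap.lineMap_apply_module, map_add, map_smul,
        map_smul, smul_eq_mul, smul_eq_mul]
      ring
    have hle : φ (AffineMap.homothety q r v) ≤ c := by
      have : φ v < c + δ := hv
      rw [hφv]
      nlinarith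
    refine ⟨⟨?_, show φ _ < c + δ by linarith⟩, hle⟩
    rw [AffineMap.homothety_eq_lineMap]
    exact hT.lineMap_mem hq hvT ⟨hr0, hr1⟩
  have hscaled : ENNReal.ofReal (r ^ finrank ℝ E) * μ U ≤ μ (U ∩ φ ⁻¹' Iic c) := by
    rw [← abs_of_nonneg (pow_nonneg hr0 _), ← Measure.addHaar_image_homothety μ q]
    exact measure_mono hmaps
  have hslab : U \ φ ⁻¹' Iic c = T ∩ φ ⁻¹' Ioo c (c + δ) := by
    ext v
    simp only [U, mem_sdiff, mem_inter_iff, mem_preimage, mem_Iio, mem_Iic, Set.mem_Ioo, not_le]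
    tauto
  rw [← hslab]
  calc μ (U \ φ ⁻¹' Iic c) ≤ μ U - ENNReal.ofReal (r ^ finrank ℝ E) * μ U := by
        refine ENNReal.le_sub_of_add_le_left (ENNReal.mul_ne_top ENNReal.ofReal_ne_top hUfin) ?_
        calc _ ≤ μ (U ∩ φ ⁻¹' Iic c) + μ (U \ φ ⁻¹' Iic c) := by gcongr
          _ = μ U := measure_inter_add_sdiff U hH
    _ = ENNReal.ofReal (1 - r ^ finrank ℝ E) * μ U := by
        rw [ENNReal.ofReal_sub _ (by positivity), ENNReal.ofReal_one,
          ENNReal.sub_mul fun _ _ => hUfin, one_mul]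
    _ ≤ ENNReal.ofReal (1 - r ^ finrank ℝ E) * μ T := by gcongr; exact inter_subset_left

theorem Convex.measure_inter_preimage_Ioo_le (hT : Convex ℝ T) (hTfin : μ T ≠ ∞)
    {q : E} (hq : q ∈ T) {c δ : ℝ} (hqc : φ q ≤ c) (hδ : 0 < δ) :
    μ (T ∩ φ ⁻¹' Ioo c (c + δ)) ≤ ENNReal.ofReal (finrank ℝ E * δ / (c + δ - φ q)) * μ T := by
  refine (hT.measure_inter_preimage_Ioo_le_one_sub_pow μ φ hTfin hq hqc hδ).trans ?_
  gcongr
  have hden : 0 < c + δ - φ q := by linarith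
  have hratio : (c - φ q) / (c + δ - φ q) = 1 + -(δ / (c + δ - φ q)) := by
    field_simp
    ring
  have hbernoulli := one_add_mul_le_pow (a := -(δ / (c + δ - φ q)))
    (by linarith [(div_le_one hden).2 (by linarith : δ ≤ c + δ - φ q)]) (finrank ℝ E)
  rw [hratio]
  linarith [mul_div_assoc (finrank ℝ E : ℝ) δ (c + δ - φ q)]

theorem Convex.measure_inter_preimage_Ioo_le_of_le_sub (hT : Convex ℝ T) (hTfin : μ T ≠ ∞)
    {p q : E} (hp : p ∈ T) (hq : q ∈ T) {w c δ : ℝ} (hw : w ≤ φ p - φ q) (hδ : 0 < δ)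
    (hδw : δ ≤ w) :
    μ (T ∩ φ ⁻¹' Ioo c (c + δ)) ≤ ENNReal.ofReal (2 * finrank ℝ E * δ / w) * μ T := by
  have hbound : ∀ a, w / 2 ≤ a → finrank ℝ E * δ / a ≤ 2 * finrank ℝ E * δ / w := fun a ha => by
    calc finrank ℝ E * δ / a ≤ finrank ℝ E * δ / (w / 2) :=
          div_le_div_of_nonneg_left (mul_nonneg (Nat.cast_nonneg _) hδ.le) (by linarith) ha
      _ = 2 * finrank ℝ E * δ / w := by ring
  by_cases hlow : (w - δ) / 2 ≤ c - φ q
  · refine (hT.measure_inter_preimage_Ioo_le μ φ hTfin hq (by linarith) hδ).trans ?_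
    gcongr ENNReal.ofReal ?_ * _
    apply hbound
    linarith
  · have hneg : (-φ) ⁻¹' Ioo (-(c + δ)) (-(c + δ) + δ) = φ ⁻¹' Ioo c (c + δ) := by
      ext v
      simp only [mem_preimage, neg_apply, Set.mem_Ioo]
      constructor <;> rintro ⟨h₁, h₂⟩ <;> constructor <;> linarith
    have := hT.measure_inter_preimage_Ioo_le μ (-φ) hTfin hp
      (show -φ p ≤ -(c + δ) by linarith) hδ
    rw [hneg] at this
    refine this.trans ?_
    gcongr ENNReal.ofReal ?_ * _
    apply hbound
    simp only [neg_apply]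
    linarith

theorem Convex.measure_inter_preimage_Ioi_le (hT : Convex ℝ T) (hTfin : μ T ≠ ∞)
    {p q : E} (hp : p ∈ T) (hq : q ∈ T) {w c δ : ℝ} (hw : w ≤ φ p - φ q) (hδ : 0 < δ)
    (hδw : δ ≤ w) :
    μ (T ∩ φ ⁻¹' Ioi c)
      ≤ ENNReal.ofReal (2 * finrank ℝ E * δ / w) * μ T + μ (T ∩ φ ⁻¹' Ici (c + δ)) := by
  have hcover : T ∩ φ ⁻¹' Ioi c ⊆ T ∩ φ ⁻¹' Ioo c (c + δ) ∪ T ∩ φ ⁻¹' Ici (c + δ) := by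
    rintro v ⟨hvT, hv⟩
    rcases lt_or_ge (φ v) (c + δ) with h | h
    exacts [Or.inl ⟨hvT, hv, h⟩, Or.inr ⟨hvT, h⟩]
  calc μ (T ∩ φ ⁻¹' Ioi c) ≤ μ (T ∩ φ ⁻¹' Ioo c (c + δ)) + μ (T ∩ φ ⁻¹' Ici (c + δ)) :=
        (measure_mono hcover).trans (measure_union_le _ _)
    _ ≤ _ := by
        gcongr
        exact hT.measure_inter_preimage_Ioo_le_of_le_sub μ φ hTfin hp hq hw hδ hδw

end Slab

theorem measure_le_ofReal_one_sub_mul_of_subset_sdiff {α : Type*} [MeasurableSpace α]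
    {μ : Measure α} {K T C : Set α} (hT : μ T ≠ ∞) (hC : NullMeasurableSet C μ) (hCT : C ⊆ T)
    (hK : K ⊆ T \ C) {t : ℝ} (ht : 0 ≤ t) (htC : ENNReal.ofReal t * μ T ≤ μ C) :
    μ K ≤ ENNReal.ofReal (1 - t) * μ T :=
  calc μ K ≤ μ T - μ C := by
        rw [← measure_sdiff hCT hC (measure_ne_top_of_subset hCT hT)]
        exact measure_mono hK
    _ ≤ μ T - ENNReal.ofReal t * μ T := by gcongr
    _ = ENNReal.ofReal (1 - t) * μ T := by
        rw [ENNReal.ofReal_sub _ ht, ENNReal.ofReal_one, ENNReal.sub_mul fun _ _ => hT, one_mul]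

theorem IsCompact.exists_width_eq {d : ℕ} {S : Set (EuclideanSpace ℝ (Fin d))}
    (hS : IsCompact S) (hSne : S.Nonempty) (x : EuclideanSpace ℝ (Fin d)) :
    ∃ p ∈ S, ∃ q ∈ S, width S x = ⟪p, x⟫ - ⟪q, x⟫ := by
  have hcont : ContinuousOn (fun v => ⟪v, x⟫) S :=
    (continuous_id.inner continuous_const).continuousOn
  obtain ⟨p, hp, hpmax⟩ := hS.exists_isMaxOn hSne hcont
  obtain ⟨q, hq, hqmin⟩ := hS.exists_isMinOn hSne hcont
  refine ⟨p, hp, q, hq, ?_⟩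
  rw [width, (IsGreatest.csSup_eq ⟨mem_image_of_mem _ hp, ?_⟩),
    (IsLeast.csInf_eq ⟨mem_image_of_mem _ hq, ?_⟩)]
  · rintro _ ⟨v, hv, rfl⟩
    exact hqmin hv
  · rintro _ ⟨v, hv, rfl⟩
    exact hpmax hv

section Mink

variable {d : ℕ} {S : Set (EuclideanSpace ℝ (Fin d))} {z : ℝ}

theorem Convex.mink (hS : Convex ℝ S) (z : ℝ) : Convex ℝ (mink S z) :=
  hS.add (convex_closedBall 0 z)

theorem IsCompact.mink (hS : IsCompact S) (z : ℝ) : IsCompact (mink S z) :=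
  hS.add (isCompact_closedBall 0 z)

theorem subset_mink (hz : 0 ≤ z) : S ⊆ mink S z :=
  fun v hv => ⟨v, hv, 0, Metric.mem_closedBall_self hz, add_zero v⟩

theorem mink_sep_inner_le_subset {x : EuclideanSpace ℝ (Fin d)} (hx : ‖x‖ ≤ 1) (a : ℝ) :
    mink {v ∈ S | ⟪v, x⟫ ≤ a} z ⊆ {u ∈ mink S z | ⟪u, x⟫ ≤ a + z} := by
  rintro _ ⟨v, ⟨hvS, hva⟩, b, hb, rfl⟩
  refine ⟨⟨v, hvS, b, hb, rfl⟩, ?_⟩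
  have hbx : ⟪b, x⟫ ≤ z :=
    calc ⟪b, x⟫ ≤ ‖b‖ * ‖x‖ := real_inner_le_norm b x
      _ ≤ z * 1 := mul_le_mul (mem_closedBall_zero_iff.1 hb) hx (norm_nonneg x)
          (le_trans (norm_nonneg b) (mem_closedBall_zero_iff.1 hb))
      _ = z := mul_one z
  rw [inner_add_left]
  linarith

end Mink

theorem two_zpow_neg_mul_two_pow (i k : ℕ) :
    (2:ℝ) ^ (-(k * 2 ^ i : ℤ)) = ((2:ℝ) ^ (-((2:ℝ) ^ ((i:ℝ) - 1)))) ^ (2 * k) := by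
  rw [← Real.rpow_intCast, ← Real.rpow_natCast, ← Real.rpow_mul zero_le_two,
    Real.rpow_sub two_pos, Real.rpow_one, Real.rpow_natCast]
  push_cast
  ring_nf

theorem one_div_ten_mul_two_rpow (t : ℝ) : 1 / (10 * (2:ℝ) ^ t) = (2:ℝ) ^ (-t) / 10 := by
  rw [Real.rpow_neg zero_le_two]
  field_simp

theorem volume_mink_accept_price_le {d : ℕ} (hd : 1 ≤ d) {S : Set (EuclideanSpace ℝ (Fin d))}
    (hSne : S.Nonempty) (hScomp : IsCompact S) (hSconv : Convex ℝ S)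
    {x : EuclideanSpace ℝ (Fin d)} (hx : ‖x‖ ≤ 1) {ε z m : ℝ} (hε0 : 0 < ε) (hε1 : ε ≤ 1)
    (hz : z = ε ^ 6 / (16 * d)) (hw : ε ^ 4 ≤ width S x)
    (hm : volume {v ∈ mink S z | m ≤ ⟪v, x⟫} = ENNReal.ofReal ε * volume (mink S z)) :
    volume (mink {v ∈ S | ⟪v, x⟫ ≤ m + z} z)
      ≤ ENNReal.ofReal (1 - ε / 10) * volume (mink S z) := by
  have hd1 : (1:ℝ) ≤ d := by exact_mod_cast hd
  have hz0 : 0 < z := by rw [hz]; positivity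
  have hδw : 4 * z ≤ ε ^ 4 := by
    have : ε ^ 6 ≤ ε ^ 4 := pow_le_pow_of_le_one hε0.le hε1 (by norm_num)
    rw [hz, ← mul_div_assoc, div_le_iff₀ (by positivity)]
    nlinarith [mul_le_mul_of_nonneg_left hd1 (pow_nonneg hε0.le 4), pow_nonneg hε0.le 4]
  have hslab : 2 * d * (4 * z) / ε ^ 4 = ε ^ 2 / 2 := by
    rw [hz]
    field_simp
    ring
  set T := mink S z
  have hTfin : volume T ≠ ∞ := (hScomp.mink z).measure_lt_top.ne
  set φ := innerSL ℝ x
  have hφ : ∀ v, φ v = ⟪v, x⟫ := fun v => real_inner_comm v x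
  obtain ⟨p, hp, q, hq, hpq⟩ := hScomp.exists_width_eq hSne x
  have hcap := (hSconv.mink z).measure_inter_preimage_Ioi_le volume φ hTfin
    (subset_mink hz0.le hp) (subset_mink hz0.le hq) (c := m - z)
    (by rw [hφ, hφ, ← hpq]; exact hw) (by positivity) hδw
  rw [finrank_euclideanSpace_fin, hslab] at hcap
  have hsuper : {v ∈ T | m ≤ ⟪v, x⟫} ⊆ T ∩ φ ⁻¹' Ioi (m - z) := fun v ⟨hvT, hv⟩ =>
    ⟨hvT, show m - z < φ v by rw [hφ]; linarith⟩
  have hCmeas : MeasurableSet (T ∩ φ ⁻¹' Ici (m - z + 4 * z)) :=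
    (hScomp.mink z).isClosed.measurableSet.inter (measurableSet_Ici.preimage φ.measurable)
  refine measure_le_ofReal_one_sub_mul_of_subset_sdiff hTfin hCmeas.nullMeasurableSet
    inter_subset_left (fun u hu => ?_) (by positivity) ?_
  · obtain ⟨huT, hux⟩ := mink_sep_inner_le_subset hx (m + z) hu
    refine ⟨huT, fun hC => ?_⟩
    have : m - z + 4 * z ≤ φ u := hC.2
    rw [hφ] at this
    linarith
  · calc ENNReal.ofReal (ε / 10) * volume T
        ≤ ENNReal.ofReal ε * volume T - ENNReal.ofReal (ε ^ 2 / 2) * volume T := by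
          rw [← ENNReal.sub_mul fun _ _ => hTfin, ← ENNReal.ofReal_sub _ (by positivity)]
          gcongr
          nlinarith
      _ ≤ volume (T ∩ φ ⁻¹' Ici (m - z + 4 * z)) :=
          tsub_le_iff_left.2 (hm ▸ (measure_mono hsuper).trans hcap)

/-- Accepting an unbalanced price shrinks the Steiner potential by a factor
`1 - 1/(10·2^{2^{i-1}})`. -/
theorem accept_unbalanced_price_potential_decrease
    (d : ℕ) (hd : 1 ≤ d)
    (S : Set (EuclideanSpace ℝ (Fin d))) (hSne : S.Nonempty) (hScomp : IsCompact S)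
    (hSconv : Convex ℝ S)
    (x : EuclideanSpace ℝ (Fin d)) (hx : ‖x‖ ≤ 1)
    (i : ℕ) (z : ℝ) (hzdef : z = (2:ℝ) ^ (-(3 * 2 ^ i : ℤ)) / (16 * d))
    (hw : (2:ℝ) ^ (-(2 ^ (i + 1) : ℤ)) ≤ width S x)
    (m : ℝ)
    (hm : volume {v ∈ mink S z | m ≤ ⟪v, x⟫}
        = ENNReal.ofReal ((2:ℝ) ^ (-((2:ℝ) ^ ((i:ℝ) - 1)))) * volume (mink S z)) :
    volume (mink {v ∈ S | ⟪v, x⟫ ≤ m + z} z)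
      ≤ ENNReal.ofReal (1 - 1 / (10 * (2:ℝ) ^ ((2:ℝ) ^ ((i:ℝ) - 1))))
          * volume (mink S z) := by
  set ε : ℝ := (2:ℝ) ^ (-((2:ℝ) ^ ((i:ℝ) - 1))) with hε
  rw [one_div_ten_mul_two_rpow, ← hε]
  refine volume_mink_accept_price_le hd hSne hScomp hSconv hx (Real.rpow_pos_of_pos two_pos _)
    (Real.rpow_le_one_of_one_le_of_nonpos one_le_two (neg_nonpos.2 (by positivity))) ?_ ?_ hm
  · rw [hzdef, show (2:ℝ) ^ (-(3 * 2 ^ i : ℤ)) = ε ^ 6 from two_zpow_neg_mul_two_pow i 3]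
  · rwa [pow_succ, mul_comm, show (2:ℝ) ^ (-(2 * 2 ^ i : ℤ)) = ε ^ 4 from
      two_zpow_neg_mul_two_pow i 2] at hw

end
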